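/- Let {E₁, …, E_n} be a complete orthogonal set of idempotents in K^{n×n} and let F be the n×n matrix whose columns are the first columns of E₁, …, E_n. Suppose every square submatrix of F has nonzero determinant. Let G be the sum of some r of the E_i and H the sum of the remaining n−r. Then every nonzero vector u ∈ K^n with uH = 0 has Hamming weight at least n−r+1. -/

import Mathlib

/-!
Since `H E_j = E_j` for `j ∈ J`, the relation `u H = 0` forces `u E_j = 0`, so `u F` vanishes on the
`n - r` columns indexed by `J`. If the support `S` of `u` had at most `n - r` elements, then `u`
restricted to `S` would be a nonzero vector in the left kernel of a square `S × J'` submatrix of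
`F` with `J' ⊆ J`, contradicting its invertibility.
-/

open Finset Matrix

namespace Matrix

variable {ι κ K : Type*} [Field K]

def IsSuperregular (F : Matrix ι κ K) : Prop :=
  ∀ (m : ℕ) (f : Fin m → ι) (g : Fin m → κ), 0 < m → Function.Injective f →
    Function.Injective g → (F.submatrix f g).det ≠ 0

theorem IsSuperregular.card_lt_hammingNorm [Fintype ι] [DecidableEq K] {F : Matrix ι κ K}
    (hF : F.IsSuperregular) {u : ι → K} (hu : u ≠ 0) {J : Finset κ}
    (huJ : ∀ j ∈ J, (u ᵥ* F) j = 0) : #J < hammingNorm u := by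
  by_contra! hle
  set S : Finset ι := {i | u i ≠ 0}
  have hS : #S = hammingNorm u := rfl
  obtain ⟨J', hJ'J, hJ'⟩ := exists_subset_card_eq (hS ▸ hle)
  let eS : Fin #S ≃ S := (Fintype.equivFinOfCardEq (Fintype.card_coe S)).symm
  let eJ : Fin #S ≃ J' := (Fintype.equivFinOfCardEq (by rw [Fintype.card_coe, hJ'])).symm
  let f : Fin #S → ι := fun i => eS i
  let g : Fin #S → κ := fun i => eJ i
  have hf : Function.Injective f := Subtype.val_injective.comp eS.injective
  have hg : Function.Injective g := Subtype.val_injective.comp eJ.injective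
  have hpos : 0 < #S := hS ▸ hammingNorm_pos_iff.mpr hu
  have hw : u ∘ f ≠ 0 := fun h => (mem_filter.mp (eS ⟨0, hpos⟩).2).2 (congrFun h ⟨0, hpos⟩)
  have hwF : (u ∘ f) ᵥ* F.submatrix f g = 0 := by
    funext j
    calc ((u ∘ f) ᵥ* F.submatrix f g) j = ∑ x ∈ S, u x * F x (g j) := by
          rw [← sum_coe_sort S]
          exact Fintype.sum_equiv eS _ _ fun _ => rfl
      _ = (u ᵥ* F) (g j) := sum_filter_of_ne fun _ _ h => left_ne_zero_of_mul h
      _ = 0 := huJ _ (hJ'J (eJ j).2)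
  exact hF _ f g hpos hf hg (exists_vecMul_eq_zero_iff.mp ⟨_, hw, hwF⟩)

end Matrix

theorem Finset.sum_mul_eq_of_orthogonal_idempotents {ι R : Type*} [Semiring R] {E : ι → R}
    (hidem : ∀ i, E i * E i = E i) (horth : ∀ i j, i ≠ j → E i * E j = 0)
    {J : Finset ι} {j : ι} (hj : j ∈ J) : (∑ k ∈ J, E k) * E j = E j := by
  rw [sum_mul, sum_eq_single_of_mem j hj fun k _ hkj => horth k j hkj, hidem]

theorem idempotent_code_mds_general {n r : ℕ} {K : Type*} [Field K] [DecidableEq K] [NeZero n]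
    (E : Fin n → Matrix (Fin n) (Fin n) K)
    (hidem : ∀ i, E i * E i = E i)
    (horth : ∀ i j, i ≠ j → E i * E j = 0)
    (F : Matrix (Fin n) (Fin n) K) (hF : ∀ i j, F i j = E j i 0)
    (hcheb : ∀ (m : ℕ) (f g : Fin m → Fin n), 0 < m → Function.Injective f →
      Function.Injective g → (F.submatrix f g).det ≠ 0)
    (J : Finset (Fin n)) (hJ : J.card = n - r)
    (H : Matrix (Fin n) (Fin n) K) (hH : H = ∑ j ∈ J, E j)
    (u : Fin n → K) (hu0 : u ≠ 0) (huH : Matrix.vecMul u H = 0) :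
    n - r + 1 ≤ hammingNorm u := by
  have huF : ∀ j ∈ J, (u ᵥ* F) j = 0 := by
    intro j hj
    have huE : u ᵥ* E j = 0 := by
      rw [← sum_mul_eq_of_orthogonal_idempotents hidem horth hj, ← hH, ← vecMul_vecMul, huH,
        zero_vecMul]
    simpa only [vecMul, dotProduct, hF, Pi.zero_apply] using congrFun huE 0
  have := IsSuperregular.card_lt_hammingNorm hcheb hu0 huF
  omega

theorem idempotent_code_mds {n r : ℕ} {K : Type*} [Field K] [DecidableEq K] [NeZero n]
    (E : Fin n → Matrix (Fin n) (Fin n) K)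
    (hidem : ∀ i, E i * E i = E i)
    (horth : ∀ i j, i ≠ j → E i * E j = 0)
    (hsum : ∑ i, E i = 1)
    (F : Matrix (Fin n) (Fin n) K) (hF : ∀ i j, F i j = E j i 0)
    (hcheb : ∀ (m : ℕ) (f g : Fin m → Fin n), 0 < m → Function.Injective f →
      Function.Injective g → (F.submatrix f g).det ≠ 0)
    (J : Finset (Fin n)) (hJ : J.card = n - r)
    (H : Matrix (Fin n) (Fin n) K) (hH : H = ∑ j ∈ J, E j)
    (u : Fin n → K) (hu0 : u ≠ 0) (huH : Matrix.vecMul u H = 0) :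
    n - r + 1 ≤ hammingNorm u :=
  idempotent_code_mds_general E hidem horth F hF hcheb J hJ H hH u hu0 huH
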